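/- Let T be an M-tableau for a set of M-clauses. If n1 and n2 are distinct nodes of T labelled by M-literals (L1, t1, S1) and (L2, t2, S2) respectively, then the domains of S1 and S2 are disjoint. -/

import Mathlib

namespace MTab

/-- Variables: ordinary variables and abstraction variables. -/
inductive Var : Type
  | ord : ℕ → Var
  | abs : ℕ → Var
  deriving DecidableEq

def Var.isAbs : Var → Prop
  | .abs _ => True
  | .ord _ => False

/-- First-order terms over function symbols `F`. -/
inductive Term (F : Type) : Type
  | var : Var → Term F
  | fn : F → List (Term F) → Term F

/-- Substitutions. -/
abbrev Subst (F : Type) := Var → Term F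

def Term.subst {F : Type} (σ : Subst F) : Term F → Term F
  | .var v => σ v
  | .fn f ts => .fn f (ts.attach.map (fun x => Term.subst σ x.1))
  decreasing_by have := List.sizeOf_lt_of_mem x.2; simp only [Term.fn.sizeOf_spec]; omega

def Term.varList {F : Type} : Term F → List Var
  | .var v => [v]
  | .fn _ ts => (ts.attach.map (fun x => Term.varList x.1)).flatten
  decreasing_by have := List.sizeOf_lt_of_mem x.2; simp only [Term.fn.sizeOf_spec]; omega

def Term.vars {F : Type} (t : Term F) : Set Var := {v | v ∈ t.varList}

def Subst.idS {F : Type} : Subst F := fun v => Term.var v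

def Subst.dom {F : Type} (σ : Subst F) : Set Var := {v | σ v ≠ Term.var v}

def Subst.vars {F : Type} (σ : Subst F) : Set Var :=
  σ.dom ∪ {v | ∃ w ∈ σ.dom, v ∈ Term.vars (σ w)}

/-- Full composition: apply `σ` first, then `τ`. -/
def Subst.comp {F : Type} (σ τ : Subst F) : Subst F := fun v => Term.subst τ (σ v)

open Classical in
/-- Composition of `σ` with `τ`, restricted to the domain of `σ`. -/
noncomputable def Subst.compOn {F : Type} (σ τ : Subst F) : Subst F :=
  fun v => if v ∈ σ.dom then Term.subst τ (σ v) else Term.var v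

def argsVars {F : Type} (args : List (Term F)) : Set Var := {v | ∃ t ∈ args, v ∈ Term.vars t}

/-- Ordinary first-order literals over predicate symbols `P`
(`pol = true` for positive literals). -/
structure Lit (F P : Type) where
  pol : Bool
  pred : P
  args : List (Term F)

def Lit.subst {F P : Type} (σ : Subst F) (l : Lit F P) : Lit F P :=
  ⟨l.pol, l.pred, l.args.map (Term.subst σ)⟩

/-- M-literals: `⊤` or a triple `(L, t, S)`. -/
inductive MLit (F P : Type)
  | top : MLit F P
  | lit (pol : Bool) (pred : P) (args : List (Term F)) (S : Set (Subst F)) : MLit F P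

/-- The (common) domain of the substitution set of an M-literal. -/
def MLit.domS {F P : Type} : MLit F P → Set Var
  | .top => ∅
  | .lit _ _ _ S => {v | ∃ σ ∈ S, v ∈ Subst.dom σ}

/-- Side conditions in the definition of M-literals: all substitutions of `S` share a
common domain `D` consisting of abstraction variables of the argument tuple, and
`Vars(t σ) ∩ D = ∅` for all `σ ∈ S`. -/
def MLit.WF {F P : Type} : MLit F P → Prop
  | .top => True
  | .lit _ _ args S =>
      (∀ σ ∈ S, ∀ τ ∈ S, Subst.dom σ = Subst.dom τ) ∧
      (∀ σ ∈ S, ∀ v ∈ Subst.dom σ, Var.isAbs v ∧ v ∈ argsVars args) ∧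
      (∀ σ ∈ S, ∀ v ∈ Subst.dom σ, v ∉ argsVars (args.map (Term.subst σ)))

def MLit.finiteS {F P : Type} : MLit F P → Prop
  | .top => True
  | .lit _ _ _ S => S.Finite

/-- All variables occurring in an M-literal. -/
def MLit.varsIn {F P : Type} : MLit F P → Set Var
  | .top => ∅
  | .lit _ _ args S => argsVars args ∪ {v | ∃ σ ∈ S, v ∈ Subst.vars σ}

/-- Semantics: `⊤` or a clause, a clause being identified with the set of its
literals (which accounts for associativity, commutativity and idempotence of `∨`). -/
inductive NF (F P : Type)
  | tru : NF F P
  | clause : Set (Lit F P) → NF F P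

def MLit.semSet {F P : Type} : MLit F P → Set (Lit F P)
  | .top => ∅
  | .lit b p args S => {l | ∃ σ ∈ S, l = ⟨b, p, args.map (Term.subst σ)⟩}

def MLit.sem {F P : Type} : MLit F P → NF F P
  | .top => .tru
  | .lit b p args S => .clause (MLit.semSet (.lit b p args S))

/-- M-clauses: sets of M-literals. -/
abbrev MClause (F P : Type) := Set (MLit F P)

open Classical in
noncomputable def MClause.sem {F P : Type} (C : MClause F P) : NF F P :=
  if MLit.top ∈ C then .tru else .clause {l | ∃ m ∈ C, l ∈ MLit.semSet m}

/-- Well-formed M-clauses: distinct M-literals have substitution sets with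
disjoint domains. -/
def MClause.WellFormed {F P : Type} (C : MClause F P) : Prop :=
  ∀ l ∈ C, ∀ m ∈ C, l ≠ m → MLit.domS l ∩ MLit.domS m = ∅

def GoodClauseSet {F P : Type} (𝒞 : Set (MClause F P)) : Prop :=
  ∀ C ∈ 𝒞, MClause.WellFormed C ∧ ∀ l ∈ C, MLit.WF l

def FiniteClauseSet {F P : Type} (𝒞 : Set (MClause F P)) : Prop :=
  ∀ C ∈ 𝒞, C.Finite ∧ ∀ l ∈ C, MLit.finiteS l

open Classical in
/-- Application of a substitution to an M-literal: the arguments are instantiated by the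
restriction of `σ` to the variables not in `dom S`, and the substitutions of `S` are
composed with `σ`. -/
noncomputable def MLit.subst {F P : Type} (σ : Subst F) : MLit F P → MLit F P
  | .top => .top
  | .lit b p args S =>
      .lit b p
        (args.map (Term.subst (fun v => if ∃ θ ∈ S, v ∈ Subst.dom θ then Term.var v else σ v)))
        ((fun θ => Subst.compOn θ σ) '' S)

/-- Renamings: injective, mapping ordinary variables to ordinary variables and
abstraction variables to abstraction variables. -/
def VarRenaming (ρ : Var → Var) : Prop :=
  Function.Injective ρ ∧ (∀ n, ∃ m, ρ (Var.ord n) = Var.ord m) ∧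
    (∀ n, ∃ m, ρ (Var.abs n) = Var.abs m)

def renSubst {F : Type} (ρ : Var → Var) : Subst F := fun v => Term.var (ρ v)

open Classical in
/-- Transport of a substitution along a renaming `ρ`. -/
noncomputable def Subst.renameBy {F : Type} (ρ : Var → Var) (σ : Subst F) : Subst F :=
  fun v => if h : ∃ w, ρ w = v then Term.subst (renSubst ρ) (σ h.choose) else Term.var v

/-- Renaming of an M-literal (all variables, including those of `dom S`, are renamed). -/
noncomputable def MLit.rename {F P : Type} (ρ : Var → Var) : MLit F P → MLit F P
  | .top => .top
  | .lit b p args S => .lit b p (args.map (Term.subst (renSubst ρ))) (Subst.renameBy ρ '' S)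

noncomputable def MClause.rename {F P : Type} (ρ : Var → Var) (C : MClause F P) : MClause F P :=
  MLit.rename ρ '' C

def MLit.head {F P : Type} : MLit F P → Option (Bool × P)
  | .top => none
  | .lit b p _ _ => some (b, p)

/-- Bundled normal form. -/
def MClause.BNF {F P : Type} (C : MClause F P) : Prop :=
  (∀ b p args S, MLit.lit b p args S ∈ C → S ≠ ∅) ∧
  (MLit.top ∈ C → C = {MLit.top}) ∧
  (∀ l ∈ C, ∀ m ∈ C, l ≠ m → MLit.head l ≠ MLit.head m)

end MTab
namespace MTab

/-- Pre-tableaux: trees labelled by M-literals. -/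
inductive Tree (F P : Type)
  | node : MLit F P → List (Tree F P) → Tree F P

def Tree.label {F P : Type} : Tree F P → MLit F P
  | .node l _ => l

def Tree.children {F P : Type} : Tree F P → List (Tree F P)
  | .node _ c => c

/-- The subtree of `t` at position `p` (a position is a list of child indices). -/
def Tree.subtreeAt {F P : Type} : List ℕ → Tree F P → Option (Tree F P)
  | [], t => some t
  | i :: p, .node _ cs => (cs[i]?).bind (Tree.subtreeAt p)

def Tree.labelAt {F P : Type} (p : List ℕ) (t : Tree F P) : Option (MLit F P) :=
  (Tree.subtreeAt p t).map Tree.label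

def Tree.IsPos {F P : Type} (t : Tree F P) (p : List ℕ) : Prop :=
  (Tree.subtreeAt p t).isSome

def Tree.IsLeafPos {F P : Type} (t : Tree F P) (p : List ℕ) : Prop :=
  ∃ l, Tree.subtreeAt p t = some (Tree.node l [])

/-- All variables occurring in the labels of a tree. -/
def Tree.varsIn {F P : Type} (t : Tree F P) : Set Var :=
  {v | ∃ p l, Tree.labelAt p t = some l ∧ v ∈ MLit.varsIn l}

noncomputable def Tree.substT {F P : Type} (σ : Subst F) : Tree F P → Tree F P
  | .node l c => .node (MLit.subst σ l) (c.attach.map (fun x => Tree.substT σ x.1))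
  decreasing_by have := List.sizeOf_lt_of_mem x.2; simp only [Tree.node.sizeOf_spec]; omega

/-- Replace the subtree at position `p` by `u`. -/
def Tree.replaceAt {F P : Type} : List ℕ → Tree F P → Tree F P → Tree F P
  | [], u, _ => u
  | i :: p, u, .node l cs =>
      .node l (match cs[i]? with
        | some tj => cs.set i (Tree.replaceAt p u tj)
        | none => cs)

/-- Change the label of the node at position `p` to `m`. -/
def Tree.relabelAt {F P : Type} : List ℕ → MLit F P → Tree F P → Tree F P
  | [], m, .node _ c => .node m c
  | i :: p, m, .node l cs =>
      .node l (match cs[i]? with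
        | some tj => cs.set i (Tree.relabelAt p m tj)
        | none => cs)

/-- Add a new (last) child `u` to the node at position `p`. -/
def Tree.appendChildAt {F P : Type} : List ℕ → Tree F P → Tree F P → Tree F P
  | [], u, .node l c => .node l (c ++ [u])
  | i :: p, u, .node l cs =>
      .node l (match cs[i]? with
        | some tj => cs.set i (Tree.appendChildAt p u tj)
        | none => cs)

/-- Number of nodes of a tree. -/
def Tree.size {F P : Type} : Tree F P → ℕ
  | .node _ c => 1 + ((c.attach.map (fun x => Tree.size x.1)).sum)
  decreasing_by have := List.sizeOf_lt_of_mem x.2; simp only [Tree.node.sizeOf_spec]; omega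

/-- Number of leaves (branches) of a tree. -/
def Tree.leafCount {F P : Type} : Tree F P → ℕ
  | .node _ [] => 1
  | .node _ (t :: ts) => (((t :: ts).attach.map (fun x => Tree.leafCount x.1)).sum)
  decreasing_by have := List.sizeOf_lt_of_mem x.2; simp only [Tree.node.sizeOf_spec]; omega

/-- Height of a tree (number of nodes on a longest branch). -/
def Tree.height {F P : Type} : Tree F P → ℕ
  | .node _ c => 1 + ((c.attach.map (fun x => Tree.height x.1)).foldr max 0)
  decreasing_by have := List.sizeOf_lt_of_mem x.2; simp only [Tree.node.sizeOf_spec]; omega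

/-- `p` is a proper prefix of `q` (i.e. the node at `q` is a proper descendant
of the node at `p`). -/
def ProperPrefix (p q : List ℕ) : Prop := p <+: q ∧ p ≠ q

def singleSubst {F : Type} (x : Var) (s : Term F) : Subst F :=
  fun v => if v = x then s else Term.var v

/-- The Expansion rule. -/
def ExpandStep {F P : Type} (𝒞 : Set (MClause F P)) (T T' : Tree F P) : Prop :=
  ∃ (p : List ℕ) (l : MLit F P) (C : MClause F P) (ρ : Var → Var) (ls : List (MLit F P)),
    Tree.subtreeAt p T = some (Tree.node l []) ∧
    C ∈ 𝒞 ∧ MLit.top ∉ C ∧ VarRenaming ρ ∧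
    ls.Nodup ∧ {m | m ∈ ls} = MClause.rename ρ C ∧
    (∀ m ∈ ls, MLit.varsIn m ∩ Tree.varsIn T = ∅) ∧
    T' = Tree.replaceAt p (Tree.node l (ls.map (fun m => Tree.node m []))) T

/-- The Instantiation rule: an ordinary variable `x` is instantiated by a term `s`,
provided every node whose label contains `x` is a proper descendant of every node
introducing an abstraction variable of `s`. -/
def InstStep {F P : Type} (T T' : Tree F P) : Prop :=
  ∃ (x : ℕ) (s : Term F),
    (∀ (p p' : List ℕ) (l l' : MLit F P),
        Tree.labelAt p T = some l → Tree.labelAt p' T = some l' →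
        Var.ord x ∈ MLit.varsIn l →
        (∃ α, α ∈ MLit.domS l' ∧ α ∈ Term.vars s ∧ Var.isAbs α) →
        ProperPrefix p' p) ∧
    T' = Tree.substT (singleSubst (Var.ord x) s) T

/-- The Separation rule, applied below the node at position `q`, on its `i`-th child `μ`
labelled `(L, t, S)`, with instantiation `θ` (so that `r = t θ`), splitting `S` into
`S1` (witnessed by the choice function `f` assigning to each `σ ∈ S1` the
corresponding `σ'`) and `S2 = S \ S1`. -/
def SepStep {F P : Type} (T : Tree F P) (q : List ℕ) (i : ℕ)
    (b : Bool) (pr : P) (args : List (Term F)) (S : Set (Subst F))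
    (θ : Subst F) (f : Subst F → Subst F) (S1 S2 : Set (Subst F)) (T' : Tree F P) : Prop :=
  ∃ (n μ : Tree F P),
    Tree.subtreeAt q T = some n ∧ n.children ≠ [] ∧
    (n.children)[i]? = some μ ∧ μ.label = MLit.lit b pr args S ∧
    Subst.dom θ = MLit.domS (MLit.lit b pr args S) ∧
    (∀ α, Var.isAbs α → α ∈ argsVars (args.map (Term.subst θ)) →
      α ∉ MLit.domS (MLit.lit b pr args S)) ∧
    S1 = {σ | σ ∈ S ∧ ∃ σ' : Subst F,
            args.map (Term.subst σ) = (args.map (Term.subst θ)).map (Term.subst σ') ∧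
            ∀ v ∈ Subst.dom σ', Var.isAbs v ∧ v ∉ Tree.varsIn T} ∧
    (∀ σ ∈ S1,
        args.map (Term.subst σ) = (args.map (Term.subst θ)).map (Term.subst (f σ)) ∧
        ∀ v ∈ Subst.dom (f σ), Var.isAbs v ∧ v ∉ Tree.varsIn T) ∧
    S1 ≠ ∅ ∧ S2 = S \ S1 ∧
    T' = Tree.appendChildAt q (Tree.node (MLit.lit b pr args S2) [])
          (Tree.relabelAt (q ++ [i]) (MLit.lit b pr (args.map (Term.subst θ)) (f '' S1))
            (Tree.substT θ T))

/-- M-tableaux for a set of M-clauses. -/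
inductive MTableau {F P : Type} (𝒞 : Set (MClause F P)) : Tree F P → Prop
  | init : MTableau 𝒞 (Tree.node MLit.top [])
  | expand {T T' : Tree F P} : MTableau 𝒞 T → ExpandStep 𝒞 T T' → MTableau 𝒞 T'
  | inst {T T' : Tree F P} : MTableau 𝒞 T → InstStep T T' → MTableau 𝒞 T'
  | sep {T T' : Tree F P} : MTableau 𝒞 T →
      (∃ q i b pr args S θ f S1 S2, SepStep T q i b pr args S θ f S1 S2 T') →
      MTableau 𝒞 T'

/-- `false` literals: M-literals with an empty substitution set. -/
def MLit.isFalse {F P : Type} : MLit F P → Prop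
  | .top => False
  | .lit _ _ _ S => S = ∅

/-- Closedness of the branch ending at leaf position `lp`. -/
def ClosedBranch {F P : Type} (T : Tree F P) (lp : List ℕ) : Prop :=
  (∃ q l, q <+: lp ∧ Tree.labelAt q T = some l ∧ MLit.isFalse l) ∨
  (∃ q1 q2 pr args S1 S2, q1 <+: lp ∧ q2 <+: lp ∧
    Tree.labelAt q1 T = some (MLit.lit true pr args S1) ∧
    Tree.labelAt q2 T = some (MLit.lit false pr args S2))

def ClosedTree {F P : Type} (T : Tree F P) : Prop :=
  ∀ p, Tree.IsLeafPos T p → ClosedBranch T p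

/-- First-order interpretations. -/
structure Interp (F P : Type) where
  carrier : Type
  nonempty : Nonempty carrier
  fI : F → List carrier → carrier
  pI : P → List carrier → Prop

def Term.eval {F P : Type} (I : Interp F P) (ν : Var → I.carrier) : Term F → I.carrier
  | .var v => ν v
  | .fn f ts => I.fI f (ts.attach.map (fun x => Term.eval I ν x.1))
  decreasing_by have := List.sizeOf_lt_of_mem x.2; simp only [Term.fn.sizeOf_spec]; omega

def Lit.holds {F P : Type} (I : Interp F P) (ν : Var → I.carrier) (l : Lit F P) : Prop :=
  if l.pol then I.pI l.pred (l.args.map (Term.eval I ν))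
  else ¬ I.pI l.pred (l.args.map (Term.eval I ν))

/-- Satisfaction of a (universally closed) clause, or of `true`. -/
def Interp.satNF {F P : Type} (I : Interp F P) : NF F P → Prop
  | .tru => True
  | .clause c => ∀ ν : Var → I.carrier, ∃ l ∈ c, Lit.holds I ν l

/-- `⟦𝒞⟧` is unsatisfiable. -/
def Unsat {F P : Type} (𝒞 : Set (MClause F P)) : Prop :=
  ¬ ∃ I : Interp F P, ∀ C ∈ 𝒞, I.satNF (MClause.sem C)

/-- Disjunction of `NF` formulas. -/
def NF.or {F P : Type} : NF F P → NF F P → NF F P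
  | .tru, _ => .tru
  | .clause _, .tru => .tru
  | .clause s, .clause s' => .clause (s ∪ s')

def NF.disj {F P : Type} (l : List (NF F P)) : NF F P := l.foldr NF.or (NF.clause ∅)

/-- Applying a substitution to an `NF` formula (instances of a formula). -/
def NF.substApp {F P : Type} (σ : Subst F) : NF F P → NF F P
  | .tru => .tru
  | .clause s => .clause (Lit.subst σ '' s)

end MTab
namespace MTab

/-! Induction on the construction of the tableau, with the invariant that labels at distinct
positions have disjoint substitution domains. Applying a substitution only shrinks these domains,
since `Subst.compOn` keeps the domain of the left factor; so Instantiation preserves the invariant.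
Expansion adds literals renamed apart from the tableau, pairwise disjoint because the clause is
well-formed and renamings are injective. Separation gives the new sibling a subset of the old
substitution set, and relabels the separated node with substitutions whose domains consist of
abstraction variables not occurring in the tableau. -/

section

variable {F P : Type}

namespace Tree

def modifyAt (g : Tree F P → Tree F P) : List ℕ → Tree F P → Tree F P
  | [], t => g t
  | i :: p, .node l cs =>
      .node l (match cs[i]? with
        | some tj => cs.set i (modifyAt g p tj)
        | none => cs)

theorem replaceAt_eq_modifyAt (u : Tree F P) :
    ∀ (p : List ℕ) (T : Tree F P), replaceAt p u T = T.modifyAt (fun _ => u) p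
  | [], _ => rfl
  | i :: p, .node l cs => by
      simp only [replaceAt, modifyAt, replaceAt_eq_modifyAt u p]

theorem relabelAt_eq_modifyAt (m : MLit F P) :
    ∀ (p : List ℕ) (T : Tree F P), T.relabelAt p m = T.modifyAt (fun t => .node m t.children) p
  | [], .node _ _ => rfl
  | i :: p, .node l cs => by
      simp only [relabelAt, modifyAt, relabelAt_eq_modifyAt m p]

theorem appendChildAt_eq_modifyAt (u : Tree F P) :
    ∀ (p : List ℕ) (T : Tree F P),
      appendChildAt p u T = T.modifyAt (fun t => .node t.label (t.children ++ [u])) p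
  | [], .node _ _ => rfl
  | i :: p, .node l cs => by
      simp only [appendChildAt, modifyAt, appendChildAt_eq_modifyAt u p]

@[simp] theorem labelAt_nil (T : Tree F P) : T.labelAt [] = some T.label := rfl

@[simp] theorem labelAt_cons (i : ℕ) (p : List ℕ) (l : MLit F P) (cs : List (Tree F P)) :
    (Tree.node l cs).labelAt (i :: p) = cs[i]?.bind (labelAt p) := by
  simp only [labelAt, subtreeAt, Option.map_bind]
  rfl

theorem subtreeAt_append : ∀ (p r : List ℕ) (T : Tree F P),
    T.subtreeAt (p ++ r) = (T.subtreeAt p).bind (subtreeAt r)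
  | [], _, _ => rfl
  | i :: p, r, .node l cs => by
      cases h : cs[i]? <;> simp [subtreeAt, h, subtreeAt_append p r]

theorem labelAt_append {p : List ℕ} {T n : Tree F P} (h : T.subtreeAt p = some n) (r : List ℕ) :
    T.labelAt (p ++ r) = n.labelAt r := by
  simp [labelAt, subtreeAt_append, h]

theorem isSome_labelAt_of_append {T : Tree F P} {p r : List ℕ}
    (h : (T.labelAt (p ++ r)).isSome) : (T.labelAt p).isSome := by
  simp only [labelAt, Option.isSome_map, subtreeAt_append] at h ⊢
  cases hp : T.subtreeAt p <;> simp_all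

theorem labelAt_modifyAt (g : Tree F P → Tree F P) :
    ∀ {p : List ℕ} {T n : Tree F P}, T.subtreeAt p = some n → ∀ q,
      (T.modifyAt g p).labelAt q = if p <+: q then (g n).labelAt (q.drop p.length) else T.labelAt q
  | [], T, n, h, q => by
      cases h; simp [modifyAt]
  | i :: p, .node l cs, n, h, [] => by
      simp [modifyAt, label]
  | i :: p, .node l cs, n, h, j :: q => by
      obtain ⟨tj, htj, hn⟩ := Option.bind_eq_some_iff.mp h
      have hi : i < cs.length := (List.getElem?_eq_some_iff.mp htj).1
      simp only [modifyAt, htj, labelAt_cons, List.cons_prefix_cons, List.length_cons,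
        List.drop_succ_cons]
      by_cases hij : i = j
      · subst hij
        simp [List.getElem?_set_self hi, htj, labelAt_modifyAt g hn q]
      · simp [List.getElem?_set_ne hij, hij]

theorem labelAt_replaceAt (u : Tree F P) {p : List ℕ} {T : Tree F P}
    (hp : (T.subtreeAt p).isSome) (q : List ℕ) :
    (replaceAt p u T).labelAt q =
      if p <+: q then u.labelAt (q.drop p.length) else T.labelAt q := by
  obtain ⟨n, hn⟩ := Option.isSome_iff_exists.mp hp
  rw [replaceAt_eq_modifyAt, labelAt_modifyAt _ hn]

theorem labelAt_relabelAt (m : MLit F P) {p : List ℕ} {T : Tree F P}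
    (hp : (T.labelAt p).isSome) (q : List ℕ) :
    (T.relabelAt p m).labelAt q = if q = p then some m else T.labelAt q := by
  obtain ⟨n, hn⟩ := Option.isSome_iff_exists.mp (Option.isSome_map.symm.trans hp)
  rw [relabelAt_eq_modifyAt, labelAt_modifyAt _ hn]
  by_cases hpq : p <+: q
  · obtain ⟨r, rfl⟩ := hpq
    cases n
    cases r <;> simp [labelAt_append hn, children, label]
  · have hqp : q ≠ p := fun h => hpq (h ▸ List.prefix_refl p)
    simp [hpq, hqp]

theorem labelAt_appendChildAt (u : Tree F P) {p : List ℕ} {T n : Tree F P}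
    (hn : T.subtreeAt p = some n) (q : List ℕ) :
    (appendChildAt p u T).labelAt q =
      if p ++ [n.children.length] <+: q then u.labelAt (q.drop (p.length + 1))
      else T.labelAt q := by
  rw [appendChildAt_eq_modifyAt, labelAt_modifyAt _ hn]
  by_cases hpq : p <+: q
  · obtain ⟨r, rfl⟩ := hpq
    obtain ⟨l, cs⟩ := n
    rcases r with _ | ⟨j, r⟩
    · have hnot : ¬ p ++ [cs.length] <+: p := fun h => by simpa using h.length_le
      simpa [hnot, children, label] using (labelAt_append hn []).symm
    · simp only [List.drop_left, labelAt_cons, children, List.prefix_append_right_inj,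
        List.cons_prefix_cons, List.nil_prefix, and_true, labelAt_append hn]
      rcases lt_trichotomy j cs.length with hj | rfl | hj
      · simp [List.getElem?_append_left hj, hj.ne']
      · simp
      · simp [List.getElem?_eq_none (by simp; omega : (cs ++ [u]).length ≤ j),
          List.getElem?_eq_none hj.le, hj.ne]
  · have hpq' : ¬ p ++ [n.children.length] <+: q :=
      fun h => hpq ((List.prefix_append _ _).trans h)
    simp [hpq, hpq']

theorem labelAt_append_children_length {p : List ℕ} {T n : Tree F P}
    (hn : T.subtreeAt p = some n) : T.labelAt (p ++ [n.children.length]) = none := by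
  cases n
  simp [labelAt_append hn, children]

theorem substT_node (σ : Subst F) (l : MLit F P) (cs : List (Tree F P)) :
    (Tree.node l cs).substT σ = .node (l.subst σ) (cs.map (substT σ)) := by
  rw [substT, List.attach_map_val]

theorem labelAt_substT (σ : Subst F) :
    ∀ (p : List ℕ) (T : Tree F P), (T.substT σ).labelAt p = (T.labelAt p).map (MLit.subst σ)
  | [], .node l cs => by simp [substT_node, label]
  | i :: p, .node l cs => by
      cases h : cs[i]? <;> simp [substT_node, h, labelAt_substT σ p]

end Tree

theorem Subst.dom_compOn_subset (σ τ : Subst F) : (σ.compOn τ).dom ⊆ σ.dom := by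
  intro v hv
  by_contra h
  exact hv (if_neg h)

theorem Subst.dom_renameBy_subset (ρ : Var → Var) (σ : Subst F) :
    (σ.renameBy ρ).dom ⊆ ρ '' σ.dom := by
  intro v hv
  by_cases h : ∃ w, ρ w = v
  · refine ⟨h.choose, fun hσ => hv ?_, h.choose_spec⟩
    simp only [Subst.renameBy, dif_pos h, show σ h.choose = .var h.choose from hσ, Term.subst,
      renSubst, h.choose_spec]
  · exact absurd (dif_neg h) hv

namespace MLit

theorem domS_subst (σ : Subst F) (l : MLit F P) : (l.subst σ).domS ⊆ l.domS := by
  cases l with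
  | top => exact fun _ h => h
  | lit b p args S =>
      rintro v ⟨_, ⟨θ, hθ, rfl⟩, hv⟩
      exact ⟨θ, hθ, Subst.dom_compOn_subset θ σ hv⟩

theorem domS_rename_subset (ρ : Var → Var) (l : MLit F P) :
    (l.rename ρ).domS ⊆ ρ '' l.domS := by
  cases l with
  | top => exact fun _ h => h.elim
  | lit b p args S =>
      rintro v ⟨_, ⟨σ, hσ, rfl⟩, hv⟩
      obtain ⟨w, hw, rfl⟩ := Subst.dom_renameBy_subset ρ σ hv
      exact ⟨w, ⟨σ, hσ, hw⟩, rfl⟩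

theorem domS_subset_varsIn (l : MLit F P) : l.domS ⊆ l.varsIn := by
  cases l with
  | top => exact fun _ h => h
  | lit b p args S =>
      rintro v ⟨σ, hσ, hv⟩
      exact Or.inr ⟨σ, hσ, Or.inl hv⟩

end MLit

theorem Tree.domS_subset_varsIn {T : Tree F P} {p : List ℕ} {l : MLit F P}
    (h : T.labelAt p = some l) : l.domS ⊆ T.varsIn :=
  fun _ hv => ⟨p, l, h, l.domS_subset_varsIn hv⟩

theorem MClause.WellFormed.rename {C : MClause F P} (hC : C.WellFormed) {ρ : Var → Var}
    (hρ : Function.Injective ρ) : (C.rename ρ).WellFormed := by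
  rintro _ ⟨c₁, hc₁, rfl⟩ _ ⟨c₂, hc₂, rfl⟩ hne
  have hc : Disjoint c₁.domS c₂.domS :=
    Set.disjoint_iff_inter_eq_empty.mpr (hC c₁ hc₁ c₂ hc₂ fun h => hne (h ▸ rfl))
  exact Set.disjoint_iff_inter_eq_empty.mp <|
    ((Set.disjoint_image_iff hρ).mpr hc).mono
      (c₁.domS_rename_subset ρ) (c₂.domS_rename_subset ρ)

namespace Tree

def DomainsDisjointAt (T : Tree F P) (p q : List ℕ) : Prop :=
  ∀ l₁ l₂, T.labelAt p = some l₁ → T.labelAt q = some l₂ → Disjoint l₁.domS l₂.domS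

def DisjointDomains (T : Tree F P) : Prop := Pairwise T.DomainsDisjointAt

theorem DomainsDisjointAt.symm {T : Tree F P} {p q : List ℕ} (h : T.DomainsDisjointAt p q) :
    T.DomainsDisjointAt q p :=
  fun l₁ l₂ h₁ h₂ => (h l₂ l₁ h₂ h₁).symm

theorem DisjointDomains.of_fresh_or_shrink {T T' : Tree F P} (hT : T.DisjointDomains)
    (fresh : Set (List ℕ)) (π : List ℕ → List ℕ) (hπ : Set.InjOn π freshᶜ)
    (hfresh : ∀ r ∈ fresh, ∀ l, T'.labelAt r = some l → Disjoint l.domS T.varsIn)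
    (hfresh_pairwise : fresh.Pairwise T'.DomainsDisjointAt)
    (hshrink : ∀ r ∉ fresh, ∀ l', T'.labelAt r = some l' →
      ∃ l, T.labelAt (π r) = some l ∧ l'.domS ⊆ l.domS) :
    T'.DisjointDomains := by
  have fresh_old : ∀ r ∈ fresh, ∀ s ∉ fresh, T'.DomainsDisjointAt r s := by
    intro r hr s hs l₁ l₂ h₁ h₂
    obtain ⟨l, hl, hsub⟩ := hshrink s hs l₂ h₂
    exact (hfresh r hr l₁ h₁).mono_right (hsub.trans (domS_subset_varsIn hl))
  intro r s hrs
  by_cases hr : r ∈ fresh <;> by_cases hs : s ∈ fresh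
  · exact hfresh_pairwise hr hs hrs
  · exact fresh_old r hr s hs
  · exact (fresh_old s hs r hr).symm
  · intro l₁ l₂ h₁ h₂
    obtain ⟨m₁, hm₁, hsub₁⟩ := hshrink r hr l₁ h₁
    obtain ⟨m₂, hm₂, hsub₂⟩ := hshrink s hs l₂ h₂
    exact (hT (fun h => hrs (hπ hr hs h)) m₁ m₂ hm₁ hm₂).mono hsub₁ hsub₂

theorem disjointDomains_leaf (l : MLit F P) : (Tree.node l []).DisjointDomains := by
  rintro (_ | ⟨i, p⟩) (_ | ⟨j, q⟩) hpq <;> simp_all [DomainsDisjointAt]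

theorem DisjointDomains.substT {T : Tree F P} (hT : T.DisjointDomains) (σ : Subst F) :
    (T.substT σ).DisjointDomains := by
  refine hT.of_fresh_or_shrink ∅ id (Set.injOn_id _) (by simp) (by simp) ?_
  intro r _ l' h
  rw [labelAt_substT] at h
  obtain ⟨l, hl, rfl⟩ := Option.map_eq_some_iff.mp h
  exact ⟨l, hl, l.domS_subst σ⟩

theorem DisjointDomains.expand {T : Tree F P} (hT : T.DisjointDomains) {p : List ℕ}
    {l : MLit F P} (hl : T.labelAt p = some l) {ls : List (MLit F P)}
    (hfresh : ∀ m ∈ ls, Disjoint m.domS T.varsIn)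
    (hls : ls.Pairwise fun m₁ m₂ => Disjoint m₁.domS m₂.domS) :
    (replaceAt p (.node l (ls.map (.node · []))) T).DisjointDomains := by
  have hp : (T.subtreeAt p).isSome := Option.isSome_map.symm.trans (Option.isSome_of_eq_some hl)
  have hchild :
      ∀ j, (replaceAt p (.node l (ls.map (.node · []))) T).labelAt (p ++ [j]) = ls[j]? := by
    intro j
    rw [labelAt_replaceAt _ hp, if_pos (List.prefix_append _ _), List.drop_left]
    rcases hj : ls[j]? <;> simp [hj, label]
  refine hT.of_fresh_or_shrink (Set.range (p ++ [·])) id (Set.injOn_id _) ?_ ?_ ?_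
  · rintro _ ⟨j, rfl⟩ m hm
    rw [hchild] at hm
    exact hfresh m (List.mem_of_getElem? hm)
  · rintro _ ⟨j, rfl⟩ _ ⟨k, rfl⟩ hjk m₁ m₂ hm₁ hm₂
    rw [hchild] at hm₁ hm₂
    obtain ⟨hj, rfl⟩ := List.getElem?_eq_some_iff.mp hm₁
    obtain ⟨hk, rfl⟩ := List.getElem?_eq_some_iff.mp hm₂
    have hjk : j ≠ k := fun h => hjk (h ▸ rfl)
    rcases hjk.lt_or_gt with h | h
    · exact List.pairwise_iff_getElem.mp hls j k hj hk h
    · exact (List.pairwise_iff_getElem.mp hls k j hk hj h).symm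
  · intro r hr l' h
    refine ⟨l', ?_, subset_rfl⟩
    rw [labelAt_replaceAt _ hp] at h
    split_ifs at h with hpr
    · obtain ⟨_ | ⟨j, _ | ⟨k, r⟩⟩, rfl⟩ := hpr
      · obtain rfl : l = l' := by simpa [label] using h
        simpa using hl
      · exact absurd ⟨j, rfl⟩ hr
      · rcases hj : ls[j]? <;> simp [hj] at h
    · exact h

theorem DisjointDomains.separate {T : Tree F P} (hT : T.DisjointDomains) (θ : Subst F)
    {q : List ℕ} {i : ℕ} {l : MLit F P} (hl : T.labelAt (q ++ [i]) = some l) {l₁ l₂ : MLit F P}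
    (hl₁ : Disjoint l₁.domS T.varsIn) (hl₂ : l₂.domS ⊆ l.domS) :
    (appendChildAt q (.node l₂ []) ((T.substT θ).relabelAt (q ++ [i]) l₁)).DisjointDomains := by
  set T₂ := (T.substT θ).relabelAt (q ++ [i]) l₁
  have hT₂ : ∀ r, T₂.labelAt r =
      if r = q ++ [i] then some l₁ else (T.labelAt r).map (·.subst θ) := by
    intro r
    rw [labelAt_relabelAt _ (by simp [labelAt_substT, hl]), labelAt_substT]
  have hq : (T₂.labelAt q).isSome := by
    rw [hT₂, if_neg (by simp)]
    simpa using isSome_labelAt_of_append (by simp [hl] : (T.labelAt (q ++ [i])).isSome)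
  obtain ⟨n, hn⟩ := Option.isSome_iff_exists.mp (by simpa [labelAt] using hq)
  have hnew : n.children.length ≠ i := by
    intro hnew
    have h := labelAt_append_children_length hn
    rw [hnew, hT₂, if_pos rfl] at h
    cases h
  have hT' := labelAt_appendChildAt (.node l₂ []) hn
  refine hT.of_fresh_or_shrink {q ++ [i]}
    (fun r => if r = q ++ [n.children.length] then q ++ [i] else r) ?_ ?_
    (Set.pairwise_singleton _ _) ?_
  · intro r hr s hs hrs
    simp only [Set.mem_compl_iff, Set.mem_singleton_iff] at hr hs hrs
    split_ifs at hrs <;> simp_all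
  · rintro _ rfl l' h
    have hnot : ¬ q ++ [n.children.length] <+: q ++ [i] := by simpa using hnew
    rw [hT', if_neg hnot, hT₂, if_pos rfl] at h
    exact Option.some_injective _ h ▸ hl₁
  · intro r hr l' h
    rw [hT'] at h
    split_ifs at h with hkr
    · obtain ⟨_ | ⟨j, s⟩, rfl⟩ := hkr
      · obtain rfl : l₂ = l' := by simpa [label] using h
        exact ⟨l, by simpa using hl, hl₂⟩
      · simp at h
    · have hrk : r ≠ q ++ [n.children.length] := fun h => hkr (h ▸ List.prefix_refl _)
      rw [hT₂, if_neg (by simpa using hr)] at h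
      obtain ⟨m, hm, rfl⟩ := Option.map_eq_some_iff.mp h
      exact ⟨m, by simpa [hrk] using hm, m.domS_subst θ⟩

end Tree

theorem MTableau.disjointDomains {𝒞 : Set (MClause F P)} (h𝒞 : ∀ C ∈ 𝒞, C.WellFormed)
    {T : Tree F P} (hT : MTableau 𝒞 T) : T.DisjointDomains := by
  induction hT with
  | init => exact Tree.disjointDomains_leaf _
  | @expand T _ _ hstep ih =>
      obtain ⟨p, l, C, ρ, ls, hleaf, hC, -, hρ, hnodup, hls, hfresh, -, rfl⟩ := hstep
      refine ih.expand (by simp [Tree.labelAt, hleaf, Tree.label]) ?_ ?_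
      · exact fun m hm =>
          (Set.disjoint_iff_inter_eq_empty.mpr (hfresh m hm)).mono_left m.domS_subset_varsIn
      · refine hnodup.imp_of_mem fun hm₁ hm₂ hne => Set.disjoint_iff_inter_eq_empty.mpr ?_
        have hren : ∀ m ∈ ls, m ∈ C.rename ρ := fun m hm => hls ▸ hm
        exact (h𝒞 C hC).rename hρ.1 _ (hren _ hm₁) _ (hren _ hm₂) hne
  | inst _ hstep ih =>
      obtain ⟨x, s, -, rfl⟩ := hstep
      exact ih.substT _
  | @sep T _ _ hstep ih =>
      obtain ⟨q, i, b, pr, args, S, θ, f, S₁, S₂, n, μ, hn, -, hμ, hlabel, -, -, -, hf, -, rfl,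
        rfl⟩ := hstep
      refine ih.separate θ (l := .lit b pr args S) ?_ ?_ ?_
      · obtain ⟨l, cs⟩ := n
        simp only [Tree.children] at hμ
        simp [Tree.labelAt_append hn, hμ, hlabel]
      · exact Set.disjoint_left.mpr fun v ⟨_, ⟨σ, hσ, rfl⟩, hv⟩ => ((hf σ hσ).2 v hv).2
      · exact fun v ⟨σ, hσ, hv⟩ => ⟨σ, hσ.1, hv⟩

end

/-- in an M-tableau for a set of (well-formed) M-clauses, the substitution
sets of the M-literals labelling two distinct nodes have disjoint domains. -/
theorem mtableau_disjoint_domains {F P : Type} (𝒞 : Set (MClause F P))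
    (h𝒞 : GoodClauseSet 𝒞) (T : Tree F P) (hT : MTableau 𝒞 T)
    (p q : List ℕ) (hpq : p ≠ q)
    (b1 : Bool) (pr1 : P) (a1 : List (Term F)) (S1 : Set (Subst F))
    (b2 : Bool) (pr2 : P) (a2 : List (Term F)) (S2 : Set (Subst F))
    (h1 : Tree.labelAt p T = some (MLit.lit b1 pr1 a1 S1))
    (h2 : Tree.labelAt q T = some (MLit.lit b2 pr2 a2 S2)) :
    MLit.domS (MLit.lit b1 pr1 a1 S1) ∩ MLit.domS (MLit.lit b2 pr2 a2 S2) = ∅ :=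
  Set.disjoint_iff_inter_eq_empty.mp <|
    hT.disjointDomains (fun C hC => (h𝒞 C hC).1) hpq _ _ h1 h2

end MTab
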